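/- arXiv:0706.1009 — 2 statements merged into one kernel-verified Lean document; each statement's English description precedes it below -/
import Mathlib

section
/- Let L(x_1, …, x_n) be a Laurent polynomial over ℚ(q) in x_1, …, x_n only, let a_1, …, a_n be fixed nonnegative integers, and let k be an integer with k ≤ a, where a = a_1 + ⋯ + a_n. Then there exists a polynomial P ∈ ℚ(q)[X] of degree at most a − k such that for every nonnegative integer a_0: CT_x [ x_0^k · L(x_1, …, x_n) · D_n(x, (a_0, a_1, …, a_n), q) ] = P(q^{a_0}). -/
/- Lemma 2.2: the constant term is a polynomial in q^{a₀} of degree at most a - k. -/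
/- Zeilberger–Bressoud q-Dyson Theorem.
Work over `K = ℚ(q)`.  Laurent polynomials in the variables `x₀, x₁, …, xₙ` are
modelled as the add-monoid algebra of `K` over exponent vectors `ℕ →₀ ℤ`
(only the variables `x₀, …, xₙ` actually occur in the q-Dyson product).
`CT` takes the coefficient of the zero exponent vector, i.e. the constant term. -/

open Finset

noncomputable section

abbrev K : Type := RatFunc ℚ

/-- Laurent polynomials (in the variables `x i`, `i : ℕ`) over `ℚ(q)`. -/
abbrev LP : Type := AddMonoidAlgebra K (ℕ →₀ ℤ)

/-- the indeterminate `q`. -/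
def q : K := RatFunc.X

/-- the Laurent monomial `(x i) ^ e`. -/
def Xp (i : ℕ) (e : ℤ) : LP := AddMonoidAlgebra.single (Finsupp.single i e) 1

/-- the constant term (coefficient of `x₀^0 x₁^0 ⋯`). -/
def CT (F : LP) : K := F.coeff 0

/-- scalars embedded in the Laurent polynomial ring. -/
def Cq : K →+* LP := algebraMap K LP

/-- the q-shifted factorial `(z)_k = (1-z)(1-zq)⋯(1-zq^{k-1})` for a Laurent polynomial `z`. -/
def poch (z : LP) (k : ℕ) : LP := ∏ t ∈ range k, (1 - Cq (q ^ t) * z)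

/-- `(q)_k = (1-q)(1-q²)⋯(1-q^k)`. -/
def qfac (k : ℕ) : K := ∏ t ∈ range k, (1 - q ^ (t + 1))

/-- the q-Dyson product `Dₙ(x, a, q) = ∏_{0 ≤ i < j ≤ n} (x_i/x_j)_{a_i} (q x_j/x_i)_{a_j}`. -/
def Dn (n : ℕ) (a : ℕ → ℕ) : LP :=
  ∏ ij ∈ ((range (n+1)) ×ˢ (range (n+1))).filter (fun ij => ij.1 < ij.2),
    poch (Xp ij.1 1 * Xp ij.2 (-1)) (a ij.1) *
      poch (Cq q * (Xp ij.2 1 * Xp ij.1 (-1))) (a ij.2)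

/- Raising `a₀` by one multiplies `Dₙ` by `∏_{j=1}^n (1 - q^{a₀} x₀/x_j)`. Expanding this product
writes the constant term at `a₀ + 1` as the one at `a₀` plus a sum, over nonempty `S ⊆ {1, …, n}`,
of `(-q^{a₀})^{|S|}` times constant terms of the same shape with `k` raised to `k + |S|` and `L`
multiplied by `∏_{j ∈ S} x_j⁻¹`. Every monomial of `Dₙ` has `x₀`-exponent at least `-a`, so these
vanish when `k + |S| > a`; the others are, by induction on `a - k`, polynomials in `q^{a₀}` of
degree at most `a - k - |S|`. Hence the first differences of the constant term are `R(q^{a₀})` with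
`R(0) = 0` and `deg R ≤ a - k`, and since `q` is not a root of unity, `R` has a `q`-antidifference
`Q(qX) - Q(X) = R(X)` of no larger degree. -/

open Polynomial

section QAntidifference

variable {F : Type*} [Field F]

def qAntidiff (r : F) (R : F[X]) : F[X] :=
  ∑ m ∈ R.support, C (R.coeff m / (r ^ m - 1)) * X ^ m

lemma coeff_qAntidiff (r : F) (R : F[X]) (m : ℕ) :
    (qAntidiff r R).coeff m = R.coeff m / (r ^ m - 1) := by
  simp only [qAntidiff, finsetSum_coeff, coeff_C_mul_X_pow, Finset.sum_ite_eq]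
  split_ifs with hm
  · rfl
  · rw [notMem_support_iff.1 hm, zero_div]

lemma natDegree_qAntidiff_le (r : F) (R : F[X]) : (qAntidiff r R).natDegree ≤ R.natDegree := by
  rw [natDegree_le_iff_coeff_eq_zero]
  intro m hm
  rw [coeff_qAntidiff, coeff_eq_zero_of_natDegree_lt hm, zero_div]

lemma qAntidiff_comp_sub {r : F} (hr : ¬ IsOfFinOrder r) {R : F[X]} (hR : R.coeff 0 = 0) :
    (qAntidiff r R).comp (C r * X) - qAntidiff r R = R := by
  ext m
  rw [coeff_sub, comp_C_mul_X_coeff, coeff_qAntidiff, ← mul_sub_one]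
  rcases eq_or_ne m 0 with rfl | hm
  · simp [hR]
  · have hrm : r ^ m - 1 ≠ 0 :=
      sub_ne_zero.2 fun h => hr (isOfFinOrder_iff_pow_eq_one.2 ⟨m, Nat.pos_of_ne_zero hm, h⟩)
    exact div_mul_cancel₀ _ hrm

theorem exists_natDegree_le_eval_pow_eq {r : F} (hr : ¬ IsOfFinOrder r) {f : ℕ → F} {R : F[X]}
    {d : ℕ} (hR0 : R.coeff 0 = 0) (hRd : R.natDegree ≤ d)
    (hf : ∀ b, f (b + 1) - f b = R.eval (r ^ b)) :
    ∃ P : F[X], P.natDegree ≤ d ∧ ∀ b, f b = P.eval (r ^ b) := by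
  refine ⟨qAntidiff r R + C (f 0 - (qAntidiff r R).eval 1), ?_, fun b => ?_⟩
  · refine (natDegree_add_le _ _).trans (max_le ((natDegree_qAntidiff_le r R).trans hRd) ?_)
    rw [natDegree_C]
    exact Nat.zero_le d
  induction b with
  | zero => simp
  | succ b ih =>
    have hQ := congrArg (eval (r ^ b)) (qAntidiff_comp_sub hr hR0)
    simp only [eval_sub, eval_comp, eval_mul, eval_C, eval_X] at hQ
    rw [eval_add, eval_C] at ih ⊢
    rw [pow_succ']
    linear_combination hf b + ih - hQ

end QAntidifference

lemma not_isOfFinOrder_q : ¬ IsOfFinOrder q := by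
  rw [isOfFinOrder_iff_pow_eq_one]
  rintro ⟨m, hm, hqm⟩
  have hXm : (X : ℚ[X]) ^ m = 1 :=
    RatFunc.algebraMap_injective ℚ (by simpa [q, RatFunc.algebraMap_X] using hqm)
  simpa [hm.ne'] using congrArg natDegree hXm

section Order

variable {R ι : Type*} [CommRing R]

def OrderGE (i : ι) (c : ℤ) (F : AddMonoidAlgebra R (ι →₀ ℤ)) : Prop :=
  ∀ e ∈ F.coeff.support, c ≤ e i

variable {i : ι} {c d : ℤ} {F G : AddMonoidAlgebra R (ι →₀ ℤ)}

lemma OrderGE.mono (h : c ≤ d) (hF : OrderGE i d F) : OrderGE i c F :=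
  fun e he => h.trans (hF e he)

lemma orderGE_single {v : ι →₀ ℤ} (r : R) (h : c ≤ v i) :
    OrderGE i c (AddMonoidAlgebra.single v r) := by
  intro e he
  rw [Finset.mem_singleton.1 (Finsupp.support_single_subset he)]
  exact h

lemma orderGE_one : OrderGE i 0 (1 : AddMonoidAlgebra R (ι →₀ ℤ)) :=
  orderGE_single 1 le_rfl

lemma OrderGE.add (hF : OrderGE i c F) (hG : OrderGE i c G) : OrderGE i c (F + G) := by
  classical
  intro e he
  rcases Finset.mem_union.1 (Finsupp.support_add he) with h | h
  exacts [hF e h, hG e h]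

lemma OrderGE.neg (hF : OrderGE i c F) : OrderGE i c (-F) := by
  intro e he
  rw [AddMonoidAlgebra.coeff_neg, Finsupp.support_neg] at he
  exact hF e he

lemma OrderGE.sub (hF : OrderGE i c F) (hG : OrderGE i c G) : OrderGE i c (F - G) :=
  sub_eq_add_neg F G ▸ hF.add hG.neg

lemma OrderGE.mul (hF : OrderGE i c F) (hG : OrderGE i d G) : OrderGE i (c + d) (F * G) := by
  classical
  intro e he
  obtain ⟨u, hu, v, hv, rfl⟩ := Finset.mem_add.1 (AddMonoidAlgebra.support_coeff_mul_subset F G he)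
  exact add_le_add (hF u hu) (hG v hv)

lemma orderGE_prod {κ : Type*} {s : Finset κ} {c : κ → ℤ} {F : κ → AddMonoidAlgebra R (ι →₀ ℤ)}
    (h : ∀ j ∈ s, OrderGE i (c j) (F j)) : OrderGE i (∑ j ∈ s, c j) (∏ j ∈ s, F j) := by
  classical
  induction s using Finset.induction with
  | empty => simpa using orderGE_one
  | insert j s hj ih =>
    rw [Finset.sum_insert hj, Finset.prod_insert hj]
    exact (h j (mem_insert_self j s)).mul (ih fun l hl => h l (mem_insert_of_mem hl))

end Order

lemma Cq_eq_single (w : K) : Cq w = AddMonoidAlgebra.single 0 w := by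
  simp [Cq, AddMonoidAlgebra.coe_algebraMap]

lemma CT_Cq_mul (w : K) (F : LP) : CT (Cq w * F) = w * CT F := by
  rw [Cq_eq_single]
  exact AddMonoidAlgebra.coeff_single_zero_mul F w 0

lemma CT_sum {ι : Type*} (s : Finset ι) (F : ι → LP) : CT (∑ i ∈ s, F i) = ∑ i ∈ s, CT (F i) := by
  simp [CT, AddMonoidAlgebra.coeff_sum]

lemma CT_eq_zero_of_orderGE {i : ℕ} {c : ℤ} {F : LP} (hc : 0 < c) (hF : OrderGE i c F) :
    CT F = 0 := by
  by_contra h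
  have := hF 0 (Finsupp.mem_support_iff.2 h)
  simp only [Finsupp.coe_zero, Pi.zero_apply] at this
  omega

lemma OrderGE.Cq_mul {i : ℕ} {c : ℤ} {F : LP} (w : K) (hF : OrderGE i c F) :
    OrderGE i c (Cq w * F) := by
  simpa [Cq_eq_single] using (orderGE_single (i := i) (v := 0) w le_rfl).mul hF

lemma orderGE_Xp_self (i : ℕ) (e : ℤ) : OrderGE i e (Xp i e) :=
  orderGE_single 1 (by simp)

lemma orderGE_Xp_of_ne {i j : ℕ} (h : j ≠ i) (e : ℤ) : OrderGE i 0 (Xp j e) :=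
  orderGE_single 1 (by simp [h])

lemma orderGE_poch {i : ℕ} {c : ℤ} {z : LP} (hc : c ≤ 0) (hz : OrderGE i c z) (m : ℕ) :
    OrderGE i (m * c) (poch z m) := by
  have h := orderGE_prod (s := range m) (c := fun _ => c)
    fun t _ => (orderGE_one.mono hc).sub (hz.Cq_mul (q ^ t))
  rwa [sum_const, card_range, nsmul_eq_mul] at h

lemma Xp_add (i : ℕ) (e f : ℤ) : Xp i (e + f) = Xp i e * Xp i f := by
  rw [Xp, Xp, Xp, AddMonoidAlgebra.single_mul_single, one_mul, Finsupp.single_add]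

lemma Xp_pow (i : ℕ) (e : ℤ) (m : ℕ) : Xp i e ^ m = Xp i (m * e) := by
  rw [Xp, Xp, AddMonoidAlgebra.single_pow, one_pow, Finsupp.smul_single, nsmul_eq_mul]

lemma OrderGE.mul_prod_Xp_neg_one {L : LP} (hL : OrderGE 0 0 L) {S : Finset ℕ} (hS : 0 ∉ S) :
    OrderGE 0 0 (L * ∏ j ∈ S, Xp j (-1)) := by
  simpa using hL.mul (orderGE_prod (c := fun _ => 0) fun j hj =>
    orderGE_Xp_of_ne (ne_of_mem_of_not_mem hj hS) (-1))

def dysonPairs (n : ℕ) : Finset (ℕ × ℕ) :=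
  ((range (n+1)) ×ˢ (range (n+1))).filter (fun ij => ij.1 < ij.2)

def dysonFactor (a : ℕ → ℕ) (i j : ℕ) : LP :=
  poch (Xp i 1 * Xp j (-1)) (a i) * poch (Cq q * (Xp j 1 * Xp i (-1))) (a j)

lemma snd_ne_zero_of_mem_dysonPairs {n : ℕ} {ij : ℕ × ℕ} (h : ij ∈ dysonPairs n) : ij.2 ≠ 0 := by
  have := (mem_filter.1 h).2
  omega

lemma filter_dysonPairs_fst_eq_zero (n : ℕ) :
    (dysonPairs n).filter (fun ij => ij.1 = 0) = (Icc 1 n).image (fun j => (0, j)) := by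
  ext ⟨i, j⟩
  simp only [dysonPairs, mem_filter, mem_product, mem_range, mem_image, mem_Icc, Prod.mk.injEq]
  constructor
  · rintro ⟨⟨⟨_, hj⟩, hij⟩, rfl⟩
    exact ⟨j, ⟨by omega, by omega⟩, rfl, rfl⟩
  · rintro ⟨j, hj, rfl, rfl⟩
    omega

lemma Dn_eq_prod_mul_prod (n : ℕ) (a : ℕ → ℕ) :
    Dn n a = (∏ j ∈ Icc 1 n, dysonFactor a 0 j) *
      ∏ ij ∈ (dysonPairs n).filter (fun ij => ij.1 ≠ 0), dysonFactor a ij.1 ij.2 := by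
  change ∏ ij ∈ dysonPairs n, dysonFactor a ij.1 ij.2 = _
  rw [← prod_filter_mul_prod_filter_not (dysonPairs n) (fun ij => ij.1 = 0),
    filter_dysonPairs_fst_eq_zero, prod_image (by simp)]

lemma orderGE_dysonFactor_zero (a : ℕ → ℕ) {j : ℕ} (hj : j ≠ 0) :
    OrderGE 0 (-(a j : ℤ)) (dysonFactor a 0 j) := by
  have h₁ := orderGE_poch le_rfl
    (((orderGE_Xp_self 0 1).mul (orderGE_Xp_of_ne hj (-1))).mono (c := 0) (by norm_num)) (a 0)
  have h₂ := orderGE_poch (by norm_num)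
    (((orderGE_Xp_of_ne hj 1).mul (orderGE_Xp_self 0 (-1))).Cq_mul q) (a j)
  simpa [dysonFactor] using h₁.mul h₂

lemma orderGE_dysonFactor (a : ℕ → ℕ) {i j : ℕ} (hi : i ≠ 0) (hj : j ≠ 0) :
    OrderGE 0 0 (dysonFactor a i j) := by
  have h₁ := orderGE_poch (by norm_num)
    ((orderGE_Xp_of_ne hi 1).mul (orderGE_Xp_of_ne hj (-1))) (a i)
  have h₂ := orderGE_poch (by norm_num)
    (((orderGE_Xp_of_ne hj 1).mul (orderGE_Xp_of_ne hi (-1))).Cq_mul q) (a j)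
  simpa [dysonFactor] using h₁.mul h₂

lemma orderGE_Dn (n : ℕ) (a : ℕ → ℕ) :
    OrderGE 0 (-(∑ j ∈ Icc 1 n, (a j : ℤ))) (Dn n a) := by
  rw [Dn_eq_prod_mul_prod, ← add_zero (-_), ← sum_neg_distrib]
  refine (orderGE_prod fun j hj => orderGE_dysonFactor_zero a ?_).mul ?_
  · have := (mem_Icc.1 hj).1
    omega
  · simpa using orderGE_prod (c := fun _ => 0) fun ij hij =>
      orderGE_dysonFactor a (mem_filter.1 hij).2 (snd_ne_zero_of_mem_dysonPairs (mem_filter.1 hij).1)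

lemma Dn_succ (n : ℕ) (a : ℕ → ℕ) (b : ℕ) :
    Dn n (fun t => if t = 0 then b + 1 else a t) =
      Dn n (fun t => if t = 0 then b else a t) *
        ∏ j ∈ Icc 1 n, (1 - Cq (q ^ b) * (Xp 0 1 * Xp j (-1))) := by
  rw [Dn_eq_prod_mul_prod, Dn_eq_prod_mul_prod, mul_right_comm, ← prod_mul_distrib]
  congr 1
  · refine prod_congr rfl fun j hj => ?_
    have hj0 : j ≠ 0 := by
      have := (mem_Icc.1 hj).1
      omega
    simp only [dysonFactor, if_pos, hj0, if_false, poch, prod_range_succ]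
    ring
  · refine prod_congr rfl fun ij hij => ?_
    simp [dysonFactor, (mem_filter.1 hij).2, snd_ne_zero_of_mem_dysonPairs (mem_filter.1 hij).1]

lemma prod_one_sub_Cq_mul_eq_sum (c : K) (s : Finset ℕ) :
    ∏ j ∈ s, (1 - Cq c * (Xp 0 1 * Xp j (-1))) =
      ∑ S ∈ s.powerset, Cq ((-c) ^ #S) * (Xp 0 #S * ∏ j ∈ S, Xp j (-1)) := by
  have h : ∀ j, 1 - Cq c * (Xp 0 1 * Xp j (-1)) = Cq (-c) * Xp 0 1 * Xp j (-1) + 1 := fun j => by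
    rw [map_neg]
    ring
  simp_rw [h]
  rw [prod_add]
  refine sum_congr rfl fun S _ => ?_
  rw [prod_const_one, mul_one, prod_mul_distrib, prod_const, mul_pow, ← map_pow, Xp_pow, mul_one,
    mul_assoc]

def dysonCT (n : ℕ) (a : ℕ → ℕ) (k : ℤ) (L : LP) (b : ℕ) : K :=
  CT (Xp 0 k * L * Dn n (fun t => if t = 0 then b else a t))

lemma dysonCT_eq_zero {n : ℕ} {a : ℕ → ℕ} {k : ℤ} {L : LP}
    (hk : ∑ j ∈ Icc 1 n, (a j : ℤ) < k) (hL : OrderGE 0 0 L) (b : ℕ) : dysonCT n a k L b = 0 := by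
  have hD := orderGE_Dn n (fun t => if t = 0 then b else a t)
  rw [sum_congr rfl fun j hj => by rw [if_neg (by have := (mem_Icc.1 hj).1; omega)]] at hD
  refine CT_eq_zero_of_orderGE ?_ (((orderGE_Xp_self 0 k).mul hL).mul hD)
  omega

lemma dysonCT_succ (n : ℕ) (a : ℕ → ℕ) (k : ℤ) (L : LP) (b : ℕ) :
    dysonCT n a k L (b + 1) = ∑ S ∈ (Icc 1 n).powerset,
      (-q ^ b) ^ #S * dysonCT n a (k + #S) (L * ∏ j ∈ S, Xp j (-1)) b := by
  rw [dysonCT, Dn_succ, prod_one_sub_Cq_mul_eq_sum, mul_sum, mul_sum, CT_sum]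
  refine sum_congr rfl fun S _ => ?_
  rw [dysonCT, ← CT_Cq_mul, Xp_add]
  ring_nf

theorem exists_poly_dysonCT (n : ℕ) (a : ℕ → ℕ) (k : ℤ) (L : LP) (hL : OrderGE 0 0 L) :
    ∃ P : K[X], P.natDegree ≤ ((∑ t ∈ Icc 1 n, (a t : ℤ)) - k).toNat ∧
      ∀ b, dysonCT n a k L b = P.eval (q ^ b) := by
  set A := ∑ t ∈ Icc 1 n, (a t : ℤ)
  obtain ⟨m, hm⟩ : ∃ m, (A - k).toNat = m := ⟨_, rfl⟩
  induction m using Nat.strong_induction_on generalizing k L with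
  | _ m ih =>
  by_cases hk : A < k
  · exact ⟨0, by simp, fun b => by rw [dysonCT_eq_zero hk hL, eval_zero]⟩
  have hterm : ∀ S ∈ (Icc 1 n).powerset.erase ∅, ∃ P : K[X],
      ((-X) ^ #S * P).natDegree ≤ (A - k).toNat ∧
        ∀ b, dysonCT n a (k + #S) (L * ∏ j ∈ S, Xp j (-1)) b = P.eval (q ^ b) := by
    intro S hS
    obtain ⟨hS0, hSn⟩ : S ≠ ∅ ∧ S ⊆ Icc 1 n := by simpa using hS
    have hLS := hL.mul_prod_Xp_neg_one fun h0 => by have := (mem_Icc.1 (hSn h0)).1; omega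
    by_cases hkS : A < k + #S
    · exact ⟨0, by simp, fun b => by rw [dysonCT_eq_zero hkS hLS, eval_zero]⟩
    have hS1 := card_pos.2 (nonempty_iff_ne_empty.2 hS0)
    obtain ⟨P, hPdeg, hP⟩ := ih _ (by omega) (k + #S) _ hLS rfl
    refine ⟨P, natDegree_mul_le.trans ?_, hP⟩
    have := natDegree_pow_le_of_le #S (natDegree_neg_le_of_le (natDegree_X_le (R := K)))
    omega
  choose! P hPdeg hP using hterm
  refine exists_natDegree_le_eval_pow_eq not_isOfFinOrder_q
    (R := ∑ S ∈ (Icc 1 n).powerset.erase ∅, (-X) ^ #S * P S) ?_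
    (natDegree_sum_le_of_forall_le _ _ hPdeg) fun b => ?_
  · rw [coeff_zero_eq_eval_zero, eval_finsetSum]
    refine sum_eq_zero fun S hS => ?_
    simp [(card_pos.2 (nonempty_iff_ne_empty.2 (ne_of_mem_erase hS))).ne']
  · rw [dysonCT_succ, ← add_sum_erase _ _ (empty_mem_powerset _), eval_finsetSum]
    simp only [card_empty, CharP.cast_eq_zero, add_zero, prod_empty, mul_one, pow_zero, one_mul,
      add_sub_cancel_left]
    refine sum_congr rfl fun S hS => ?_
    rw [hP S hS, eval_mul, eval_pow, eval_neg, eval_X]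

theorem ct_poly_in_qa0_general (n : ℕ) (a : ℕ → ℕ) (k : ℤ)
    (L : LP) (hL : ∀ e ∈ L.coeff.support, e 0 = 0 ∧ ∀ t, n < t → e t = 0) :
    ∃ P : Polynomial K,
      P.degree ≤ (((∑ t ∈ Icc 1 n, a t : ℤ) - k).toNat : ℕ) ∧
      ∀ a₀ : ℕ,
        CT (Xp 0 k * L * Dn n (fun t => if t = 0 then a₀ else a t)) =
          P.eval (q ^ a₀) := by
  obtain ⟨P, hdeg, hP⟩ := exists_poly_dysonCT n a k L fun e he => (hL e he).1.ge
  exact ⟨P, natDegree_le_iff_degree_le.1 hdeg, hP⟩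

/-- Let `L` be a Laurent polynomial in `x₁, …, xₙ` only (independent of `x₀`),
let `a₁, …, aₙ` be fixed nonnegative integers, and let `k ≤ a = a₁ + ⋯ + aₙ` be
an integer.  Then there is a polynomial `P` over `ℚ(q)` of degree at most
`a - k` such that for every nonnegative integer `a₀`,
`CT (x₀^k · L · Dₙ(x,(a₀,a₁,…,aₙ),q)) = P(q^{a₀})`. -/
theorem ct_poly_in_qa0 (n : ℕ) (a : ℕ → ℕ) (k : ℤ)
    (hk : k ≤ (∑ t ∈ Icc 1 n, a t : ℤ))
    (L : LP) (hL : ∀ e ∈ L.coeff.support, e 0 = 0 ∧ ∀ t, n < t → e t = 0) :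
    ∃ P : Polynomial K,
      P.degree ≤ (((∑ t ∈ Icc 1 n, a t : ℤ) - k).toNat : ℕ) ∧
      ∀ a₀ : ℕ,
        CT (Xp 0 k * L * Dn n (fun t => if t = 0 then a₀ else a t)) =
          P.eval (q ^ a₀) :=
  ct_poly_in_qa0_general n a k L hL

end
end

section
/- Let T_0 be a subset of I = I_0 ∖ {0} and set w = a − σ(T_0), where σ(T_0) = Σ_{t ∈ T_0} a_t. Then G(q^{−(w+1)}) = Σ_T (−1)^{w + |T|} q^{L*(T)} (q)_w (q)_{a−w} / ((q)_{a_1} ⋯ (q)_{a_n}), where the sum ranges over all T ⊆ I with Σ_{t ∈ T} a_t = σ(T_0), and for each such T, with w_i = a_i for i ∉ T and w_i = 0 for i ∈ T (1 ≤ i ≤ n), L*(T) = Σ_{l ∈ I} Σ_{i=l}^{n} w_i − Σ_{l=1}^{ν} p_l Σ_{i=j_l}^{n} w_i − (w+1 choose 2) − 1. -/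
/- Evaluation of the rational function G(X) at X = q^{-(w+1)}. -/
open Finset

noncomputable section

/-- the field `ℚ(q)(X)`. -/
abbrev KX : Type := RatFunc K

/-- the indeterminate `X`. -/
def XX : KX := RatFunc.X

/-- constants `ℚ(q) → ℚ(q)(X)`. -/
def CK : K →+* KX := RatFunc.C

/-- `σ'(T) = ∑_{t ∈ T, t ≠ 0} a_t`. -/
def sigma' (a : ℕ → ℕ) (T : Finset ℕ) : ℕ := ∑ t ∈ T.erase 0, a t

/-- `w i = a i` for `i ∉ T` and `w i = 0` for `i ∈ T`. -/
def wgt (a : ℕ → ℕ) (T : Finset ℕ) (t : ℕ) : ℕ := if t ∈ T then 0 else a t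

/-- `L̃(T) = ∑_{l ∈ I₀} ∑_{i=max(l,1)}^n w_i − ∑_{l=1}^ν p_l ∑_{i=j_l}^n w_i`. -/
def Ltil (n : ℕ) {m ν : ℕ} (i : Fin m → ℕ) (j p : Fin ν → ℕ) (a : ℕ → ℕ)
    (T : Finset ℕ) : ℤ :=
  (∑ l ∈ Finset.image i univ, ∑ t ∈ Icc (max l 1) n, (wgt a T t : ℤ))
    - ∑ k : Fin ν, (p k : ℤ) * ∑ t ∈ Icc (j k) n, (wgt a T t : ℤ)

/-- the rational function
`G(X) = (∏_{i=1}^a (1 - X q^i) / ((q)_{a₁}⋯(q)_{aₙ})) ∑_{∅≠T⊆I₀} (-1)^{|T|} q^{L̃(T)} S_T(X)`,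
where `S_T(X) = (1 - X q^{σ'(T)})/(1 - q^{1+a-σ'(T)})` if `0 ∈ T`, and
`S_T(X) = X (1 - q^{σ'(T)})/(1 - X q^{1+a-σ'(T)})` if `0 ∉ T`. -/
def G (n : ℕ) {m ν : ℕ} (i : Fin m → ℕ) (j p : Fin ν → ℕ) (a : ℕ → ℕ) : KX :=
  ((∏ t ∈ range (∑ k ∈ Icc 1 n, a k), (1 - XX * CK (q ^ (t + 1)))) /
      CK (∏ k ∈ Icc 1 n, qfac (a k))) *
    ∑ T ∈ (Finset.image i univ).powerset.filter (fun T => T.Nonempty),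
      (-1 : KX) ^ T.card * CK (q ^ Ltil n i j p a T) *
        (if (0 : ℕ) ∈ T then
          (1 - XX * CK (q ^ sigma' a T)) /
            CK (1 - q ^ ((1 + ∑ k ∈ Icc 1 n, a k : ℤ) - sigma' a T))
        else
          XX * CK (1 - q ^ sigma' a T) /
            (1 - XX * CK (q ^ ((1 + ∑ k ∈ Icc 1 n, a k : ℤ) - sigma' a T))))

/-- `L*(T) = ∑_{l ∈ I} ∑_{i=l}^n w_i − ∑_{l=1}^ν p_l ∑_{i=j_l}^n w_i − C(w+1,2) − 1`. -/
def Lstar (n : ℕ) {m ν : ℕ} (i : Fin m → ℕ) (j p : Fin ν → ℕ) (a : ℕ → ℕ)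
    (w : ℕ) (T : Finset ℕ) : ℤ :=
  (∑ l ∈ (Finset.image i univ).erase 0, ∑ t ∈ Icc l n, (wgt a T t : ℤ))
    - (∑ k : Fin ν, (p k : ℤ) * ∑ t ∈ Icc (j k) n, (wgt a T t : ℤ))
    - (Nat.choose (w+1) 2 : ℤ) - 1

/-
Pairing each `T ⊆ I` with `T ∪ {0}` (which has the same `L̃` and `σ'`) writes `G` as a sum over
`T ⊆ I` of `(-1)^{|T|} q^{L̃(T)} (Xq;q)_a (S_T - S_{T ∪ {0}}) / ∏ (q)_{a_i}`, the bracket depending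
on `T` only through `s = σ(T)`. At `x = q^{-(w+1)}` the prefactor `(Xq;q)_a` vanishes unless
`w = a`, while `S_T` has a simple pole there exactly when `s = σ(T₀) > 0`, cancelling that zero.
Hence the terms with `σ(T) ≠ σ(T₀)` vanish (for `w = a` because `S_T` and `S_{T ∪ {0}}` take the
same value), and each remaining term contributes `(-1)^w q^{-(w+1) - C(w+1,2)} (q)_w (q)_{σ(T)}`.
-/

namespace RatFunc

variable {F : Type*} [Field F]

theorem intDegree_X_zpow (k : ℤ) : intDegree ((X : RatFunc F) ^ k) = k := by
  obtain ⟨k, rfl | rfl⟩ := k.eq_nat_or_neg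
  · rw [zpow_natCast, ← algebraMap_X, ← map_pow, intDegree_polynomial,
      Polynomial.natDegree_X_pow]
  · rw [zpow_neg, intDegree_inv, zpow_natCast, ← algebraMap_X, ← map_pow,
      intDegree_polynomial, Polynomial.natDegree_X_pow]

theorem X_zpow_ne_one {k : ℤ} (hk : k ≠ 0) : (X : RatFunc F) ^ k ≠ 1 := fun h =>
  hk (by simpa [h] using (intDegree_X_zpow (F := F) k).symm)

/-- `f` is regular at `x` with value `v`. Unlike `RatFunc.eval`, whose additivity and
multiplicativity depend on the reduced denominators, this relation is closed under the field
operations. -/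
def HasValueAt (x : F) (f : RatFunc F) (v : F) : Prop :=
  ∃ p r : Polynomial F, r.eval x ≠ 0 ∧
    f = algebraMap _ _ p / algebraMap _ _ r ∧ v = p.eval x / r.eval x

theorem hasValueAt_C (x c : F) : HasValueAt x (C c) c :=
  ⟨Polynomial.C c, 1, by simp, by rw [map_one, div_one, algebraMap_C], by simp⟩

theorem hasValueAt_X (x : F) : HasValueAt x X x :=
  ⟨Polynomial.X, 1, by simp, by rw [map_one, div_one, algebraMap_X], by simp⟩

namespace HasValueAt

variable {x : F} {f g : RatFunc F} {v w : F}

theorem eval_eq (h : HasValueAt x f v) : eval (RingHom.id F) x f = v := by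
  obtain ⟨p, r, hr, rfl, rfl⟩ := h
  have hr0 : r ≠ 0 := by rintro rfl; simp at hr
  set f := algebraMap (Polynomial F) (RatFunc F) p / algebraMap _ _ r
  have hden : f.denom.eval x ≠ 0 := by
    obtain ⟨c, hc⟩ := denom_div_dvd p r
    exact fun h0 => hr (by rw [hc, Polynomial.eval_mul, h0, zero_mul])
  have hcross := congrArg (Polynomial.eval x) ((num_mul_eq_mul_denom_iff hr0).mpr rfl :
    f.num * r = p * f.denom)
  rw [Polynomial.eval_mul, Polynomial.eval_mul] at hcross
  rw [eval, Polynomial.eval₂_id, Polynomial.eval₂_id, div_eq_div_iff hden hr, hcross]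

theorem ne_zero (h : HasValueAt x f v) (hv : v ≠ 0) : f ≠ 0 := by
  rintro rfl
  exact hv (by rw [← h.eval_eq, eval_zero])

theorem add (hf : HasValueAt x f v) (hg : HasValueAt x g w) : HasValueAt x (f + g) (v + w) := by
  obtain ⟨p, r, hr, rfl, rfl⟩ := hf
  obtain ⟨p', r', hr', rfl, rfl⟩ := hg
  have hr0 : algebraMap _ (RatFunc F) r ≠ 0 := algebraMap_ne_zero (by rintro rfl; simp at hr)
  have hr0' : algebraMap _ (RatFunc F) r' ≠ 0 := algebraMap_ne_zero (by rintro rfl; simp at hr')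
  refine ⟨p * r' + p' * r, r * r', by simp [hr, hr'], ?_, ?_⟩
  · rw [map_mul, map_add, map_mul, map_mul]
    field_simp
  · simp only [Polynomial.eval_add, Polynomial.eval_mul]
    field_simp

theorem mul (hf : HasValueAt x f v) (hg : HasValueAt x g w) : HasValueAt x (f * g) (v * w) := by
  obtain ⟨p, r, hr, rfl, rfl⟩ := hf
  obtain ⟨p', r', hr', rfl, rfl⟩ := hg
  refine ⟨p * p', r * r', by simp [hr, hr'], ?_, ?_⟩
  · rw [map_mul, map_mul, div_mul_div_comm]
  · rw [Polynomial.eval_mul, Polynomial.eval_mul, div_mul_div_comm]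

theorem div (hf : HasValueAt x f v) (hg : HasValueAt x g w) (hw : w ≠ 0) :
    HasValueAt x (f / g) (v / w) := by
  obtain ⟨p, r, hr, rfl, rfl⟩ := hf
  obtain ⟨p', r', hr', rfl, rfl⟩ := hg
  have hp' : p'.eval x ≠ 0 := fun h => hw (by rw [h, zero_div])
  refine ⟨p * r', r * p', by simp [hr, hp'], ?_, ?_⟩
  · rw [map_mul, map_mul, div_div_div_eq]
  · rw [Polynomial.eval_mul, Polynomial.eval_mul, div_div_div_eq]

theorem neg (hf : HasValueAt x f v) : HasValueAt x (-f) (-v) := by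
  simpa using (hasValueAt_C x (-1)).mul hf

theorem sub (hf : HasValueAt x f v) (hg : HasValueAt x g w) : HasValueAt x (f - g) (v - w) := by
  simpa only [sub_eq_add_neg] using hf.add hg.neg

end HasValueAt

theorem hasValueAt_sum {ι : Type*} {x : F} {s : Finset ι} {f : ι → RatFunc F} {v : ι → F}
    (h : ∀ t ∈ s, HasValueAt x (f t) (v t)) : HasValueAt x (∑ t ∈ s, f t) (∑ t ∈ s, v t) := by
  classical
  induction s using Finset.induction_on with
  | empty => simpa using hasValueAt_C x 0
  | insert t s hts ih =>
    rw [sum_insert hts, sum_insert hts]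
    exact (h t (mem_insert_self t s)).add (ih fun u hu => h u (mem_insert_of_mem hu))

theorem hasValueAt_prod {ι : Type*} {x : F} {s : Finset ι} {f : ι → RatFunc F} {v : ι → F}
    (h : ∀ t ∈ s, HasValueAt x (f t) (v t)) : HasValueAt x (∏ t ∈ s, f t) (∏ t ∈ s, v t) := by
  classical
  induction s using Finset.induction_on with
  | empty => simpa using hasValueAt_C x 1
  | insert t s hts ih =>
    rw [prod_insert hts, prod_insert hts]
    exact (h t (mem_insert_self t s)).mul (ih fun u hu => h u (mem_insert_of_mem hu))

end RatFunc

open RatFunc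

theorem q_ne_zero : q ≠ 0 := X_ne_zero

theorem one_sub_q_zpow_ne_zero {k : ℤ} (hk : k ≠ 0) : 1 - q ^ k ≠ 0 :=
  sub_ne_zero.mpr (X_zpow_ne_one hk).symm

theorem one_sub_q_pow_ne_zero {k : ℕ} (hk : k ≠ 0) : 1 - q ^ k ≠ 0 := by
  simpa using one_sub_q_zpow_ne_zero (k := k) (by exact_mod_cast hk)

theorem qfac_zero : qfac 0 = 1 := prod_range_zero _

theorem qfac_succ (k : ℕ) : qfac (k + 1) = qfac k * (1 - q ^ (k + 1)) :=
  prod_range_succ _ _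

theorem one_sub_q_zpow_neg (k : ℤ) : 1 - q ^ (-k) = -q ^ (-k) * (1 - q ^ k) := by
  rw [mul_sub, mul_one, neg_mul, ← zpow_add₀ q_ne_zero, neg_add_cancel, zpow_zero]
  ring

theorem prod_one_sub_q_zpow_neg (k : ℕ) :
    ∏ v ∈ range k, (1 - q ^ (-((v : ℤ) + 1))) =
      (-1) ^ k * q ^ (-((k + 1).choose 2 : ℤ)) * qfac k := by
  induction k with
  | zero => simp [qfac_zero]
  | succ k ih =>
    have hexp : -((k + 1 + 1).choose 2 : ℤ) = -((k + 1).choose 2 : ℤ) + -((k : ℤ) + 1) := by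
      rw [Nat.choose_succ_succ', Nat.choose_one_right]; push_cast; ring
    rw [prod_range_succ, ih, qfac_succ, one_sub_q_zpow_neg, hexp, zpow_add₀ q_ne_zero _ (-_),
      ← zpow_natCast q (k + 1), Nat.cast_succ]
    ring

theorem q_zpow_neg_succ_mul_q_pow (w t : ℕ) :
    q ^ (-((w : ℤ) + 1)) * q ^ (t + 1) = q ^ ((t : ℤ) - w) := by
  rw [← zpow_natCast, ← zpow_add₀ q_ne_zero]
  congr 1
  push_cast
  ring

theorem prod_one_sub_q_zpow_neg_succ_mul (w : ℕ) :
    ∏ t ∈ range w, (1 - q ^ (-((w : ℤ) + 1)) * q ^ (t + 1)) =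
      (-1) ^ w * q ^ (-((w + 1).choose 2 : ℤ)) * qfac w := by
  rw [← prod_one_sub_q_zpow_neg, ← prod_range_reflect]
  refine prod_congr rfl fun t ht => ?_
  rw [q_zpow_neg_succ_mul_q_pow]
  have := mem_range.mp ht
  congr 2
  omega

theorem prod_one_sub_q_zpow_neg_succ_mul_eq_zero {w A : ℕ} (h : w < A) :
    ∏ t ∈ range A, (1 - q ^ (-((w : ℤ) + 1)) * q ^ (t + 1)) = 0 :=
  prod_eq_zero (mem_range.mpr h) (by rw [q_zpow_neg_succ_mul_q_pow, sub_self, zpow_zero, sub_self])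

theorem inv_mul_one_sub_div_eq {F : Type*} [Field F] {y z : F} (hy : y ≠ 0) (hy1 : y ≠ 1)
    (hz : z ≠ 0) (hz1 : z ≠ 1) :
    (y * z)⁻¹ * (1 - y) / (1 - (y * z)⁻¹ * z) = (1 - (y * z)⁻¹ * y) / (1 - z) := by
  have hy1' : 1 - y ≠ 0 := sub_ne_zero.mpr (Ne.symm hy1)
  have hz1' : 1 - z ≠ 0 := sub_ne_zero.mpr (Ne.symm hz1)
  rw [mul_inv, inv_mul_cancel_right₀ hz, mul_comm y⁻¹, inv_mul_cancel_right₀ hy]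
  field_simp
  ring

def xqPochhammer (A : ℕ) : KX := ∏ t ∈ range A, (1 - XX * CK (q ^ (t + 1)))

/-- `S_T(X) - S_{T ∪ {0}}(X)` for `0 ∉ T`, where `A = a` and `s = σ'(T)`. -/
def pairedTerm (A s : ℕ) : KX :=
  XX * CK (1 - q ^ s) / (1 - XX * CK (q ^ ((1 + A : ℤ) - s))) -
    (1 - XX * CK (q ^ s)) / CK (1 - q ^ ((1 + A : ℤ) - s))

theorem hasValueAt_CK (x c : K) : HasValueAt x (CK c) c := hasValueAt_C x c

theorem hasValueAt_XX (x : K) : HasValueAt x XX x := hasValueAt_X x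

theorem hasValueAt_one_sub_XX_mul (x c : K) : HasValueAt x (1 - XX * CK c) (1 - x * c) := by
  have h := (hasValueAt_CK x 1).sub ((hasValueAt_XX x).mul (hasValueAt_CK x c))
  rwa [map_one] at h

theorem one_sub_XX_mul_ne_zero (c : K) : 1 - XX * CK c ≠ 0 :=
  (hasValueAt_one_sub_XX_mul 0 c).ne_zero (by simp)

theorem hasValueAt_xqPochhammer (x : K) (A : ℕ) :
    HasValueAt x (xqPochhammer A) (∏ t ∈ range A, (1 - x * q ^ (t + 1))) :=
  hasValueAt_prod fun _ _ => hasValueAt_one_sub_XX_mul x _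

theorem hasValueAt_xqPochhammer_mul_pairedTerm_zero (w : ℕ) :
    HasValueAt (q ^ (-((w : ℤ) + 1))) (xqPochhammer w * pairedTerm w 0)
      ((-1) ^ w * q ^ (-((w : ℤ) + 1) - (w + 1).choose 2) * qfac w * qfac 0) := by
  set x := q ^ (-((w : ℤ) + 1))
  have hexp : (1 + w : ℤ) - (0 : ℕ) = w + 1 := by push_cast; ring
  have hden : 1 - q ^ ((w : ℤ) + 1) ≠ 0 := one_sub_q_zpow_ne_zero (by omega)
  have hterm : pairedTerm w 0 = -((1 - XX * CK 1) / CK (1 - q ^ ((w : ℤ) + 1))) := by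
    simp only [pairedTerm, hexp, pow_zero, sub_self, map_zero, mul_zero, zero_div, zero_sub]
  rw [hterm, mul_neg]
  convert ((hasValueAt_xqPochhammer x w).mul
    ((hasValueAt_one_sub_XX_mul x 1).div (hasValueAt_CK x _) hden)).neg using 1
  rw [prod_one_sub_q_zpow_neg_succ_mul, mul_one, one_sub_q_zpow_neg, qfac_zero,
    zpow_sub₀ q_ne_zero, zpow_neg q (((w + 1).choose 2 : ℕ) : ℤ)]
  field_simp

theorem hasValueAt_xqPochhammer_mul_pairedTerm_pole (w s : ℕ) :
    HasValueAt (q ^ (-((w : ℤ) + 1)))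
      (xqPochhammer (w + (s + 1)) * pairedTerm (w + (s + 1)) (s + 1))
      ((-1) ^ w * q ^ (-((w : ℤ) + 1) - (w + 1).choose 2) * qfac w * qfac (s + 1)) := by
  set x := q ^ (-((w : ℤ) + 1))
  have hexp : q ^ ((1 + (w + (s + 1) : ℕ) : ℤ) - (s + 1 : ℕ)) = q ^ (w + 1) := by
    rw [← zpow_natCast]; congr 1; push_cast; ring
  have hsplit : xqPochhammer (w + (s + 1)) = xqPochhammer w *
      (∏ t ∈ range s, (1 - XX * CK (q ^ (w + (t + 1) + 1)))) * (1 - XX * CK (q ^ (w + 1))) := by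
    rw [xqPochhammer, prod_range_add, prod_range_succ', ← xqPochhammer, mul_assoc]
  -- the simple pole of `S_T` at `x` cancels against the zero of the prefactor
  have hcancel : xqPochhammer (w + (s + 1)) * pairedTerm (w + (s + 1)) (s + 1) =
      xqPochhammer w * (∏ t ∈ range s, (1 - XX * CK (q ^ (w + (t + 1) + 1)))) *
          (XX * CK (1 - q ^ (s + 1))) -
        xqPochhammer (w + (s + 1)) * ((1 - XX * CK (q ^ (s + 1))) / CK (1 - q ^ (w + 1))) := by
    rw [pairedTerm, hexp, mul_sub]
    congr 1
    rw [hsplit, mul_div_assoc', div_eq_iff (one_sub_XX_mul_ne_zero _)]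
    ring
  rw [hcancel]
  convert (((hasValueAt_xqPochhammer x w).mul (hasValueAt_prod fun t _ =>
      hasValueAt_one_sub_XX_mul x (q ^ (w + (t + 1) + 1)))).mul
        ((hasValueAt_XX x).mul (hasValueAt_CK x _))).sub
      ((hasValueAt_xqPochhammer x _).mul ((hasValueAt_one_sub_XX_mul x _).div (hasValueAt_CK x _)
        (one_sub_q_pow_ne_zero w.succ_ne_zero))) using 1
  have hshift : ∏ t ∈ range s, (1 - x * q ^ (w + (t + 1) + 1)) = qfac s := by
    refine prod_congr rfl fun t _ => ?_
    rw [q_zpow_neg_succ_mul_q_pow, ← zpow_natCast]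
    congr 2; push_cast; ring
  rw [prod_one_sub_q_zpow_neg_succ_mul, hshift,
    prod_one_sub_q_zpow_neg_succ_mul_eq_zero (by omega), zero_mul, sub_zero, qfac_succ,
    zpow_sub₀ q_ne_zero, zpow_neg q (((w + 1).choose 2 : ℕ) : ℤ)]
  ring

theorem hasValueAt_xqPochhammer_mul_pairedTerm_of_ne {w A s : ℕ} (hw : w ≤ A) (hs : s ≤ A)
    (hne : s + w ≠ A) : HasValueAt (q ^ (-((w : ℤ) + 1))) (xqPochhammer A * pairedTerm A s) 0 := by
  set x := q ^ (-((w : ℤ) + 1)) with hxdef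
  have hxu : x * q ^ ((1 + A : ℤ) - s) = q ^ ((A : ℤ) - w - s) := by
    rw [← zpow_add₀ q_ne_zero]; congr 1; ring
  have hden : 1 - x * q ^ ((1 + A : ℤ) - s) ≠ 0 := by
    rw [hxu]; exact one_sub_q_zpow_ne_zero (by omega)
  have hu : (1 + A : ℤ) - s ≠ 0 := by omega
  rw [pairedTerm]
  convert (hasValueAt_xqPochhammer x A).mul
    (((hasValueAt_XX x).mul (hasValueAt_CK x (1 - q ^ s))).div (hasValueAt_one_sub_XX_mul x _)
      hden |>.sub ((hasValueAt_one_sub_XX_mul x (q ^ s)).div (hasValueAt_CK x _)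
        (one_sub_q_zpow_ne_zero hu))) using 1
  rcases hw.lt_or_eq with hlt | rfl
  · rw [prod_one_sub_q_zpow_neg_succ_mul_eq_zero hlt, zero_mul]
  -- for `w = A` both summands of `S_T - S_{T ∪ {0}}` take the value `-q^{s - A - 1}`
  have hx : x = (q ^ s * q ^ ((1 + w : ℤ) - s))⁻¹ := by
    rw [hxdef, ← zpow_natCast, ← zpow_add₀ q_ne_zero, ← zpow_neg]; congr 1; ring
  rw [hx, inv_mul_one_sub_div_eq (pow_ne_zero _ q_ne_zero) ?_ (zpow_ne_zero _ q_ne_zero) ?_,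
    sub_self, mul_zero]
  · exact (sub_ne_zero.mp (one_sub_q_pow_ne_zero (by omega))).symm
  · exact (sub_ne_zero.mp (one_sub_q_zpow_ne_zero hu)).symm

theorem hasValueAt_xqPochhammer_mul_pairedTerm {A s₀ s : ℕ} (hs₀ : s₀ ≤ A) (hs : s ≤ A) :
    HasValueAt (q ^ (-(((A - s₀ : ℕ) : ℤ) + 1))) (xqPochhammer A * pairedTerm A s)
      (if s = s₀ then
        (-1) ^ (A - s₀) * q ^ (-(((A - s₀ : ℕ) : ℤ) + 1) - (A - s₀ + 1).choose 2) *
          qfac (A - s₀) * qfac s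
      else 0) := by
  split_ifs with h
  · subst h
    obtain ⟨w, rfl⟩ : ∃ w, A = w + s := ⟨A - s, by omega⟩
    rw [Nat.add_sub_cancel]
    cases s with
    | zero => exact hasValueAt_xqPochhammer_mul_pairedTerm_zero w
    | succ s => exact hasValueAt_xqPochhammer_mul_pairedTerm_pole w s
  · exact hasValueAt_xqPochhammer_mul_pairedTerm_of_ne (Nat.sub_le A s₀) hs (by omega)

theorem sum_wgt_add_sum {a : ℕ → ℕ} {s T : Finset ℕ} (hT : T ⊆ s) :
    ∑ t ∈ s, wgt a T t + ∑ t ∈ T, a t = ∑ t ∈ s, a t := by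
  have hout : ∀ t ∈ s \ T, wgt a T t = a t := fun t ht => if_neg (mem_sdiff.mp ht).2
  have hin : ∀ t ∈ T, wgt a T t = 0 := fun t ht => if_pos ht
  rw [← sum_sdiff hT, ← sum_sdiff hT (f := a), sum_congr rfl hout, sum_eq_zero hin, add_zero]

section Summands

variable {n m ν : ℕ} {i : Fin m → ℕ} {j p : Fin ν → ℕ} {a : ℕ → ℕ}

theorem wgt_insert_zero {T : Finset ℕ} {t : ℕ} (ht : t ≠ 0) :
    wgt a (insert 0 T) t = wgt a T t := by
  simp [wgt, ht]

theorem Ltil_insert_zero (hj0 : ∀ k, 0 < j k) (T : Finset ℕ) :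
    Ltil n i j p a (insert 0 T) = Ltil n i j p a T := by
  unfold Ltil
  congr 1
  · refine sum_congr rfl fun l _ => sum_congr rfl fun t ht => ?_
    rw [wgt_insert_zero (by have := (mem_Icc.mp ht).1; omega)]
  · refine sum_congr rfl fun k _ => congrArg _ <| sum_congr rfl fun t ht => ?_
    rw [wgt_insert_zero (by have := (mem_Icc.mp ht).1; have := hj0 k; omega)]

theorem Ltil_eq_Lstar (h0 : 0 ∈ image i univ) (w : ℕ) (T : Finset ℕ) :
    Ltil n i j p a T =
      Lstar n i j p a w T + ∑ t ∈ Icc 1 n, (wgt a T t : ℤ) + (w + 1).choose 2 + 1 := by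
  have hsum : ∑ l ∈ image i univ, ∑ t ∈ Icc (max l 1) n, (wgt a T t : ℤ) =
      ∑ t ∈ Icc 1 n, (wgt a T t : ℤ) +
        ∑ l ∈ (image i univ).erase 0, ∑ t ∈ Icc l n, (wgt a T t : ℤ) := by
    rw [← add_sum_erase _ _ h0]
    refine congrArg _ (sum_congr rfl fun l hl => ?_)
    rw [max_eq_left (Nat.one_le_iff_ne_zero.mpr (ne_of_mem_erase hl))]
  rw [Ltil, Lstar, hsum]
  ring

variable (n i j p a) in
def GSummand (T : Finset ℕ) : KX :=
  (-1 : KX) ^ T.card * CK (q ^ Ltil n i j p a T) *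
    (if (0 : ℕ) ∈ T then
      (1 - XX * CK (q ^ sigma' a T)) /
        CK (1 - q ^ ((1 + ∑ k ∈ Icc 1 n, a k : ℤ) - sigma' a T))
    else
      XX * CK (1 - q ^ sigma' a T) /
        (1 - XX * CK (q ^ ((1 + ∑ k ∈ Icc 1 n, a k : ℤ) - sigma' a T))))

theorem G_eq_mul_sum_GSummand : G n i j p a =
    xqPochhammer (∑ k ∈ Icc 1 n, a k) / CK (∏ k ∈ Icc 1 n, qfac (a k)) *
      ∑ T ∈ (image i univ).powerset.filter (fun T => T.Nonempty), GSummand n i j p a T :=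
  rfl

theorem GSummand_empty : GSummand n i j p a ∅ = 0 := by
  simp [GSummand, sigma']

theorem GSummand_add_GSummand_insert_zero (hj0 : ∀ k, 0 < j k) {T : Finset ℕ} (h0T : 0 ∉ T) :
    GSummand n i j p a T + GSummand n i j p a (insert 0 T) =
      (-1) ^ T.card * CK (q ^ Ltil n i j p a T) *
        pairedTerm (∑ k ∈ Icc 1 n, a k) (∑ t ∈ T, a t) := by
  have hsigma : sigma' a T = ∑ t ∈ T, a t := by rw [sigma', erase_eq_self.mpr h0T]
  have hsigma' : sigma' a (insert 0 T) = ∑ t ∈ T, a t := by rw [sigma', erase_insert h0T]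
  simp only [GSummand, if_neg h0T, if_pos (mem_insert_self 0 T), hsigma, hsigma',
    card_insert_of_notMem h0T, Ltil_insert_zero hj0, pairedTerm]
  ring

theorem G_eq_sum_pairedTerm (hj0 : ∀ k, 0 < j k) (h0 : 0 ∈ image i univ) :
    G n i j p a = ∑ T ∈ ((image i univ).erase 0).powerset,
      CK ((-1) ^ T.card * q ^ Ltil n i j p a T / ∏ k ∈ Icc 1 n, qfac (a k)) *
        (xqPochhammer (∑ k ∈ Icc 1 n, a k) * pairedTerm (∑ k ∈ Icc 1 n, a k) (∑ t ∈ T, a t)) := by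
  have hne : ∀ T ∈ (image i univ).powerset, GSummand n i j p a T ≠ 0 → T.Nonempty :=
    fun T _ h => nonempty_iff_ne_empty.mpr (by rintro rfl; exact h GSummand_empty)
  rw [G_eq_mul_sum_GSummand, sum_filter_of_ne hne]
  conv_lhs => rw [← insert_erase h0, sum_powerset_insert (notMem_erase 0 _), ← sum_add_distrib]
  rw [mul_sum]
  refine sum_congr rfl fun T hT => ?_
  rw [GSummand_add_GSummand_insert_zero hj0 fun h => (mem_erase.mp (mem_powerset.mp hT h)).1 rfl]
  simp only [map_div₀, map_mul, map_pow, map_neg, map_one]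
  ring

end Summands

theorem G_eval_at_extra_points_general (n m ν : ℕ) (i : Fin m → ℕ) (j p : Fin ν → ℕ)
    (hm : 0 < m)
    (hi0 : i ⟨0, hm⟩ = 0) (hin : ∀ k, i k < n)
    (hj0 : ∀ k, 0 < j k)
    (a : ℕ → ℕ) (T₀ : Finset ℕ)
    (hT₀ : T₀ ⊆ (Finset.image i univ).erase 0) :
    RatFunc.eval (RingHom.id K)
        (q ^ (-(((∑ t ∈ Icc 1 n, a t) - (∑ t ∈ T₀, a t) : ℕ) + 1 : ℤ)))
        (G n i j p a) =
      ∑ T ∈ ((Finset.image i univ).erase 0).powerset.filter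
          (fun T => ∑ t ∈ T, a t = ∑ t ∈ T₀, a t),
        (-1 : K) ^ ((∑ t ∈ Icc 1 n, a t) - (∑ t ∈ T₀, a t) + T.card) *
          q ^ Lstar n i j p a ((∑ t ∈ Icc 1 n, a t) - (∑ t ∈ T₀, a t)) T *
          qfac ((∑ t ∈ Icc 1 n, a t) - (∑ t ∈ T₀, a t)) *
          qfac ((∑ t ∈ Icc 1 n, a t) - ((∑ t ∈ Icc 1 n, a t) - (∑ t ∈ T₀, a t))) /
          ∏ k ∈ Icc 1 n, qfac (a k) := by
  set A := ∑ t ∈ Icc 1 n, a t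
  set s₀ := ∑ t ∈ T₀, a t
  have h0 : 0 ∈ image i univ := mem_image.mpr ⟨⟨0, hm⟩, mem_univ _, hi0⟩
  have hI : (image i univ).erase 0 ⊆ Icc 1 n := fun t ht => by
    obtain ⟨hne, k, -, rfl⟩ := mem_erase.mp ht |>.imp_right mem_image.mp
    exact mem_Icc.mpr ⟨Nat.one_le_iff_ne_zero.mpr hne, (hin k).le⟩
  have hs₀ : s₀ ≤ A := sum_le_sum_of_subset (hT₀.trans hI)
  rw [G_eq_sum_pairedTerm hj0 h0, (hasValueAt_sum fun T hT => (hasValueAt_CK _ _).mul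
    (hasValueAt_xqPochhammer_mul_pairedTerm hs₀
      (sum_le_sum_of_subset ((mem_powerset.mp hT).trans hI)))).eval_eq]
  simp only [mul_ite, mul_zero]
  rw [← sum_filter]
  refine sum_congr rfl fun T hT => ?_
  obtain ⟨hTI, hT₀sum⟩ := mem_filter.mp hT |>.imp_left mem_powerset.mp
  have hwgt : ∑ t ∈ Icc 1 n, wgt a T t = A - s₀ :=
    Nat.eq_sub_of_add_eq (hT₀sum ▸ sum_wgt_add_sum (hTI.trans hI))
  have hL : Ltil n i j p a T + (-(((A - s₀ : ℕ) : ℤ) + 1) - (A - s₀ + 1).choose 2) =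
      Lstar n i j p a (A - s₀) T := by
    rw [Ltil_eq_Lstar h0 (A - s₀) T, ← Nat.cast_sum, hwgt]
    ring
  rw [hT₀sum, Nat.sub_sub_self hs₀, pow_add, ← hL, zpow_add₀ q_ne_zero]
  ring

/-- For `T₀ ⊆ I = I₀ \ {0}` and `w = a - σ(T₀)`:
`G(q^{-(w+1)}) = ∑_T (-1)^{w+|T|} q^{L*(T)} (q)_w (q)_{a-w} / ((q)_{a₁}⋯(q)_{aₙ})`,
the sum over all `T ⊆ I` with `σ(T) = σ(T₀)`. -/
theorem G_eval_at_extra_points (n m ν : ℕ) (i : Fin m → ℕ) (j p : Fin ν → ℕ)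
    (hm : 0 < m)
    (hi_mono : StrictMono i) (hi0 : i ⟨0, hm⟩ = 0) (hin : ∀ k, i k < n)
    (hj_mono : StrictMono j) (hj0 : ∀ k, 0 < j k) (hjn : ∀ k, j k ≤ n)
    (hij : ∀ k l, i k ≠ j l)
    (hp : ∀ k, 0 < p k) (hpm : ∑ k, p k = m)
    (a : ℕ → ℕ) (T₀ : Finset ℕ)
    (hT₀ : T₀ ⊆ (Finset.image i univ).erase 0) :
    RatFunc.eval (RingHom.id K)
        (q ^ (-(((∑ t ∈ Icc 1 n, a t) - (∑ t ∈ T₀, a t) : ℕ) + 1 : ℤ)))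
        (G n i j p a) =
      ∑ T ∈ ((Finset.image i univ).erase 0).powerset.filter
          (fun T => ∑ t ∈ T, a t = ∑ t ∈ T₀, a t),
        (-1 : K) ^ ((∑ t ∈ Icc 1 n, a t) - (∑ t ∈ T₀, a t) + T.card) *
          q ^ Lstar n i j p a ((∑ t ∈ Icc 1 n, a t) - (∑ t ∈ T₀, a t)) T *
          qfac ((∑ t ∈ Icc 1 n, a t) - (∑ t ∈ T₀, a t)) *
          qfac ((∑ t ∈ Icc 1 n, a t) - ((∑ t ∈ Icc 1 n, a t) - (∑ t ∈ T₀, a t))) /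
          ∏ k ∈ Icc 1 n, qfac (a k) :=
  G_eval_at_extra_points_general n m ν i j p hm hi0 hin hj0 a T₀ hT₀

end
end
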